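/- arXiv:1904.03637 — 4 statements merged into one kernel-verified Lean document; each statement's English description precedes it below -/
import Mathlib

section
/- Let α be a countable ordinal with finite big Ramsey degrees. Then for every integer m ≥ 1 the ordinal α·m has finite big Ramsey degrees; moreover T(n, α·m) ≤ Σ_{τ} T(r(τ), α), the sum over all (n, m)-multiplicative types τ. -/
open Set

/-- The big Ramsey degree of the `n`-element chain in the chain `C` is at most `t`:
for every `k ≥ 2` and every `k`-coloring of the `n`-element subchains of `C`
(identified with order-embeddings `Fin n ↪o C`) there is a subset `U ⊆ C`
order-isomorphic to `C` on which the coloring attains at most `t` values. -/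
def brdLE (C : Type*) [LinearOrder C] (n t : ℕ) : Prop :=
  ∀ k : ℕ, 2 ≤ k → ∀ χ : (Fin n ↪o C) → Fin k,
    ∃ U : Set C, Nonempty (U ≃o C) ∧ (χ '' {f | ∀ i, f i ∈ U}).ncard ≤ t

/-- `T(n, C) = t`: `t` is the least natural number with `brdLE C n t`. -/
def hasBRD (C : Type*) [LinearOrder C] (n t : ℕ) : Prop :=
  brdLE C n t ∧ ∀ s : ℕ, brdLE C n s → t ≤ s

/-- `C` has finite big Ramsey degrees: `T(n, C) < ∞` for every `n ≥ 1`. -/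
def finiteBRD (C : Type*) [LinearOrder C] : Prop :=
  ∀ n : ℕ, 1 ≤ n → ∃ t : ℕ, brdLE C n t


/-- The level of `f i` for an embedding `f : n ↪ A·m` (with `A·m` realized
antilexicographically as `Fin m ×ₗ A`). -/
def lvls {A : Type*} [LinearOrder A] {n m : ℕ} (f : Fin n ↪o (Fin m ×ₗ A)) (i : Fin n) :
    Fin m := (ofLex (f i)).1

/-- The value of `f i` for an embedding `f : n ↪ A·m`. -/
def vals {A : Type*} [LinearOrder A] {n m : ℕ} (f : Fin n ↪o (Fin m ×ₗ A)) (i : Fin n) :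
    A := (ofLex (f i)).2

/-- The multiplicative type of an embedding `f : n ↪ A·m`: the level of each point
(which also records the number `p_ℓ` of points on each level, since levels are monotone)
together with the total quasiorder on `Fin n` comparing values. -/
def mulTp {A : Type*} [LinearOrder A] {n m : ℕ} (f : Fin n ↪o (Fin m ×ₗ A)) :
    (Fin n → Fin m) × (Fin n → Fin n → Bool) :=
  (lvls f, fun i j => decide (vals f i ≤ vals f j))

/-- The rank of a multiplicative type: the number of equivalence classes of the
total quasiorder `σ`. -/
noncomputable def rankTp {n : ℕ} (σ : Fin n → Fin n → Bool) : ℕ :=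
  Nat.card (Quot fun i j => σ i j = true ∧ σ j i = true)



/-!
An embedding `f : n ↪ A·m` is determined by its multiplicative type `τ` together with the
increasing enumeration of its set of values, an `r(τ)`-element subchain of `A`. Hence a coloring
of the `n`-chains of `A·m` induces, for each of the finitely many types `τ`, a coloring of the
`r(τ)`-chains of `A`. Applying the big Ramsey property of `A` to these colorings one after the
other yields a single copy `A'` of `A` on which each of them takes at most `T(r(τ))` colors, and
`A'·m` is then a copy of `A·m` on which the original coloring takes at most `∑_τ T(r(τ))` colors.
-/

section SelfEmbedding

variable {C : Type*} [LinearOrder C]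

lemma setOf_forall_mem_range_eq_range_trans {D : Type*} [LinearOrder D] {n : ℕ} (e : C ↪o D) :
    {f : Fin n ↪o D | ∀ i, f i ∈ range e} = range fun g : Fin n ↪o C => g.trans e := by
  refine Subset.antisymm (fun f hf => ?_) ?_
  · choose g hg using hf
    have hmono : StrictMono g := fun i j hij => by
      rw [← e.lt_iff_lt, hg, hg]
      exact f.strictMono hij
    exact ⟨OrderEmbedding.ofStrictMono g hmono, RelEmbedding.ext hg⟩
  · rintro _ ⟨g, rfl⟩ i
    exact mem_range_self _

/-- Copies of `C` inside `C` are exactly the ranges of self-embeddings. -/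
lemma brdLE_iff_exists_orderEmbedding {n t : ℕ} :
    brdLE C n t ↔ ∀ k, 2 ≤ k → ∀ χ : (Fin n ↪o C) → Fin k,
      ∃ e : C ↪o C, (range fun f : Fin n ↪o C => χ (f.trans e)).ncard ≤ t := by
  refine forall₂_congr fun k _ => forall_congr' fun χ => ⟨?_, ?_⟩
  · rintro ⟨U, ⟨eU⟩, hU⟩
    let e : C ↪o C := eU.symm.toOrderEmbedding.trans (OrderEmbedding.subtype (· ∈ U))
    have hrange : range e = U := by
      simp [e, range_comp, eU.symm.surjective.range_eq]
    refine ⟨e, ?_⟩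
    rwa [← hrange, setOf_forall_mem_range_eq_range_trans, ← range_comp] at hU
  · rintro ⟨e, he⟩
    refine ⟨range e, ⟨e.orderIso.symm⟩, ?_⟩
    rwa [setOf_forall_mem_range_eq_range_trans, ← range_comp]

lemma exists_orderEmbedding_forall_ncard_le {ι : Type*} [Finite ι] {k : ℕ} (hk : 2 ≤ k)
    {r t : ι → ℕ} (hb : ∀ i, brdLE C (r i) (t i)) (χ : ∀ i, (Fin (r i) ↪o C) → Fin k) :
    ∃ e : C ↪o C, ∀ i, (range fun g : Fin (r i) ↪o C => χ i (g.trans e)).ncard ≤ t i := by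
  classical
  have := Fintype.ofFinite ι
  suffices h : ∀ s : Finset ι, ∃ e : C ↪o C,
      ∀ i ∈ s, (range fun g : Fin (r i) ↪o C => χ i (g.trans e)).ncard ≤ t i by
    obtain ⟨e, he⟩ := h Finset.univ
    exact ⟨e, fun i => he i (Finset.mem_univ i)⟩
  intro s
  induction s using Finset.induction with
  | empty => exact ⟨RelEmbedding.refl (· ≤ ·), by simp⟩
  | @insert i s _ ih =>
    obtain ⟨e, he⟩ := ih
    obtain ⟨e', he'⟩ := (brdLE_iff_exists_orderEmbedding.mp (hb i)) k hk fun g => χ i (g.trans e)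
    refine ⟨e'.trans e, (Finset.forall_mem_insert _ _ _).mpr ⟨he', fun j hj => ?_⟩⟩
    refine le_trans (ncard_le_ncard ?_ (toFinite _)) (he j hj)
    rintro _ ⟨g, rfl⟩
    exact ⟨g.trans e', rfl⟩

end SelfEmbedding

section ValueRank

variable {A : Type*} [LinearOrder A] {n r : ℕ}

lemma rankTp_decide_le (v : Fin n → A) :
    rankTp (fun i j => decide (v i ≤ v j)) = (Finset.univ.image v).card := by
  have hrel : ∀ i j, (decide (v i ≤ v j) = true ∧ decide (v j ≤ v i) = true) ↔ v i = v j := by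
    intro i j
    simp only [decide_eq_true_eq]
    exact le_antisymm_iff.symm
  rw [rankTp, Nat.card_congr ((Quot.congrRight hrel).trans (Setoid.quotientKerEquivRange v)),
    Nat.card_eq_card_toFinset, Set.toFinset_range]

lemma one_le_rankTp (hn : 1 ≤ n) (σ : Fin n → Fin n → Bool) : 1 ≤ rankTp σ := by
  have : Nonempty (Quot fun i j => σ i j = true ∧ σ j i = true) := ⟨Quot.mk _ ⟨0, hn⟩⟩
  exact Nat.card_pos

noncomputable def valueRank (v : Fin n → A) (hv : (Finset.univ.image v).card = r) (i : Fin n) :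
    Fin r :=
  ((Finset.univ.image v).orderIsoOfFin hv).symm
    ⟨v i, Finset.mem_image_of_mem v (Finset.mem_univ i)⟩

lemma valueRank_lt_valueRank {v : Fin n → A} (hv : (Finset.univ.image v).card = r) {i j : Fin n} :
    valueRank v hv i < valueRank v hv j ↔ v i < v j := by
  rw [valueRank, valueRank, OrderIso.lt_iff_lt, Subtype.mk_lt_mk]

lemma valueRank_eq_valueRank {v : Fin n → A} (hv : (Finset.univ.image v).card = r) {i j : Fin n} :
    valueRank v hv i = valueRank v hv j ↔ v i = v j := by
  rw [valueRank, valueRank, EmbeddingLike.apply_eq_iff_eq, Subtype.mk.injEq]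

lemma valueRank_surjective {v : Fin n → A} (hv : (Finset.univ.image v).card = r) :
    Function.Surjective (valueRank v hv) := by
  intro a
  obtain ⟨i, -, hi⟩ := Finset.mem_image.mp ((Finset.univ.image v).orderEmbOfFin_mem hv a)
  refine ⟨i, (OrderIso.symm_apply_eq _).mpr (Subtype.ext ?_)⟩
  simpa using hi

lemma orderEmbOfFin_valueRank {v w : Fin n → A} (hvw : ∀ i j, v i ≤ v j ↔ w i ≤ w j)
    (hv : (Finset.univ.image v).card = r) (hw : (Finset.univ.image w).card = r) (i : Fin n) :
    (Finset.univ.image w).orderEmbOfFin hw (valueRank v hv i) = w i := by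
  choose sec hsec using valueRank_surjective hv
  have hmono : StrictMono (w ∘ sec) := fun a b hab => by
    rw [← hsec a, ← hsec b, valueRank_lt_valueRank] at hab
    simpa only [Function.comp, ← not_le, hvw] using hab
  have hmem : ∀ a, (w ∘ sec) a ∈ Finset.univ.image w := fun a =>
    Finset.mem_image_of_mem w (Finset.mem_univ _)
  rw [← Finset.orderEmbOfFin_unique hw hmem hmono]
  have hv_eq : v (sec (valueRank v hv i)) = v i := (valueRank_eq_valueRank hv).mp (hsec _)
  exact le_antisymm ((hvw _ _).mp hv_eq.le) ((hvw _ _).mp hv_eq.ge)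

end ValueRank

def OrderEmbedding.prodLexMapRight {L A B : Type*} [LinearOrder L] [LinearOrder A]
    [LinearOrder B] (e : A ↪o B) : L ×ₗ A ↪o L ×ₗ B :=
  OrderEmbedding.ofStrictMono (fun p => toLex ((ofLex p).1, e (ofLex p).2)) fun p q hpq => by
    rw [Prod.Lex.lt_iff] at hpq
    simpa [Prod.Lex.lt_iff, e.lt_iff_lt] using hpq

section MulTp

variable {A : Type*} [LinearOrder A] {n m r : ℕ}

lemma rankTp_mulTp (f : Fin n ↪o (Fin m ×ₗ A)) :
    rankTp (mulTp f).2 = (Finset.univ.image (vals f)).card :=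
  rankTp_decide_le (vals f)

lemma vals_le_vals_iff_of_mulTp_eq {f g : Fin n ↪o (Fin m ×ₗ A)} (h : mulTp f = mulTp g)
    (i j : Fin n) : vals f i ≤ vals f j ↔ vals g i ≤ vals g j := by
  simpa [mulTp] using congrFun (congrFun (congrArg Prod.snd h) i) j

noncomputable def replaceVals (f : Fin n ↪o (Fin m ×ₗ A))
    (hf : (Finset.univ.image (vals f)).card = r) (g : Fin r ↪o A) : Fin n ↪o (Fin m ×ₗ A) :=
  OrderEmbedding.ofStrictMono (fun i => toLex (lvls f i, g (valueRank (vals f) hf i)))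
    fun i j hij => by
      have hfij := f.strictMono hij
      rw [Prod.Lex.lt_iff] at hfij
      simpa [Prod.Lex.lt_iff, g.lt_iff_lt, valueRank_lt_valueRank, lvls, vals] using hfij

lemma replaceVals_trans (f : Fin n ↪o (Fin m ×ₗ A)) (hf : (Finset.univ.image (vals f)).card = r)
    (g : Fin r ↪o A) (e : A ↪o A) :
    replaceVals f hf (g.trans e) = (replaceVals f hf g).trans (OrderEmbedding.prodLexMapRight e) :=
  rfl

lemma replaceVals_orderEmbOfFin {f g : Fin n ↪o (Fin m ×ₗ A)} (h : mulTp f = mulTp g)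
    (hf : (Finset.univ.image (vals f)).card = r) (hg : (Finset.univ.image (vals g)).card = r) :
    replaceVals f hf ((Finset.univ.image (vals g)).orderEmbOfFin hg) = g := by
  refine RelEmbedding.ext fun i => ?_
  change toLex (lvls f i, _) = g i
  rw [orderEmbOfFin_valueRank (vals_le_vals_iff_of_mulTp_eq h) hf hg,
    show lvls f = lvls g from congrArg Prod.fst h]
  rfl

end MulTp

open Classical in
theorem brdLE_prodLex_of_brdLE {A : Type*} [LinearOrder A] {n m : ℕ} (hn : 1 ≤ n) {T : ℕ → ℕ}
    (hT : ∀ j, 1 ≤ j → brdLE A j (T j)) :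
    brdLE (Fin m ×ₗ A) n
      (∑ τ : (Fin n → Fin m) × (Fin n → Fin n → Bool),
        if ∃ f : Fin n ↪o (Fin m ×ₗ A), mulTp f = τ then T (rankTp τ.2) else 0) := by
  rw [brdLE_iff_exists_orderEmbedding]
  intro k hk χ
  let Tp := {τ // ∃ f : Fin n ↪o (Fin m ×ₗ A), mulTp f = τ}
  choose f₀ hf₀ using fun τ : Tp => τ.2
  have hcard : ∀ τ : Tp, (Finset.univ.image (vals (f₀ τ))).card = rankTp τ.1.2 := fun τ => by
    rw [← rankTp_mulTp, hf₀]
  obtain ⟨e, he⟩ := exists_orderEmbedding_forall_ncard_le hk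
    (fun τ : Tp => hT _ (one_le_rankTp hn τ.1.2))
    (fun τ g => χ (replaceVals (f₀ τ) (hcard τ) g))
  refine ⟨OrderEmbedding.prodLexMapRight e, ?_⟩
  have hcover :
      (range fun f : Fin n ↪o (Fin m ×ₗ A) => χ (f.trans (OrderEmbedding.prodLexMapRight e))) ⊆
        ⋃ τ : Tp, range fun g : Fin (rankTp τ.1.2) ↪o A =>
          χ (replaceVals (f₀ τ) (hcard τ) (g.trans e)) := by
    rintro _ ⟨f, rfl⟩
    let τ : Tp := ⟨mulTp f, f, rfl⟩
    refine mem_iUnion.mpr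
      ⟨τ, (Finset.univ.image (vals f)).orderEmbOfFin (rankTp_mulTp f).symm, ?_⟩
    dsimp only
    rw [replaceVals_trans, replaceVals_orderEmbOfFin (hf₀ τ)]
  calc _ ≤ _ := ncard_le_ncard hcover (toFinite _)
    _ ≤ ∑ τ : Tp, _ := ncard_iUnion_le_of_fintype _
    _ ≤ ∑ τ : Tp, T (rankTp τ.1.2) := Finset.sum_le_sum fun τ _ => he τ
    _ = _ := by
      rw [← Finset.sum_filter]
      exact Eq.symm <| Finset.sum_subtype _ (by simp) _

open Classical in
theorem stmt7_general (α : Ordinal)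
    (T : ℕ → ℕ) (hT : ∀ j : ℕ, 1 ≤ j → hasBRD ↥(Set.Iio α) j (T j))
    (n m : ℕ) (hn : 1 ≤ n) :
    brdLE (Fin m ×ₗ ↥(Set.Iio α)) n
      (∑ τ : (Fin n → Fin m) × (Fin n → Fin n → Bool),
        if ∃ f : Fin n ↪o (Fin m ×ₗ ↥(Set.Iio α)), mulTp f = τ then rankTp τ.2 |> T else 0) :=
  brdLE_prodLex_of_brdLE hn fun j hj => (hT j hj).1

open Classical in
/-- If a countable ordinal `α` has finite big Ramsey degrees (`T j = T(j, α)` for `j ≥ 1`),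
then `α·m` has finite big Ramsey degrees; moreover
`T(n, α·m) ≤ ∑_τ T(r(τ))`, the sum over all `(n, m)`-multiplicative types `τ`. -/
theorem stmt7 (α : Ordinal) (hcnt : α.card ≤ Cardinal.aleph0)
    (T : ℕ → ℕ) (hT : ∀ j : ℕ, 1 ≤ j → hasBRD ↥(Set.Iio α) j (T j))
    (n m : ℕ) (hn : 1 ≤ n) (hm : 1 ≤ m) :
    brdLE (Fin m ×ₗ ↥(Set.Iio α)) n
      (∑ τ : (Fin n → Fin m) × (Fin n → Fin n → Bool),
        if ∃ f : Fin n ↪o (Fin m ×ₗ ↥(Set.Iio α)), mulTp f = τ then rankTp τ.2 |> T else 0) :=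
  stmt7_general α T hT n m hn
end

section
/- Fix integers s ≥ 1 and n₀, …, n_{s−1} ≥ 1 and let N = n₀ + … + n_{s−1}. For every k ≥ 2 and every coloring χ of the product of the sets of nᵢ-element subsets of ω, there is an infinite U ⊆ ω such that χ attains at most Σ_{j=1}^{N} j!·S(N, j) colors on the product of nᵢ-element subsets of U, where S(N, j) is the Stirling number of the second kind. -/
open Set

/-- Stirling numbers of the second kind. -/
def stirling2 : ℕ → ℕ → ℕ
  | 0, 0 => 1
  | 0, _ + 1 => 0
  | _ + 1, 0 => 0
  | n + 1, j + 1 => (j + 1) * stirling2 n (j + 1) + stirling2 n j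


/-!
A map `f : P → ℕ` on a finite set `P` of positions is determined by its finite set of values `B`
together with its pattern, the surjection `P → Fin |B|` sending `p` to the rank of `f p` in `B`.
For each of the finitely many patterns, the colour of the map built from a `j`-set `B` is a colouring
of `j`-subsets of `ℕ`, and the infinite Ramsey theorem, applied to these colourings one after the
other, gives an infinite `U` on which the colour of `f` with values in `U` depends only on the
pattern of `f`. There are `∑ j, j! * S(|P|, j)` surjective patterns, and a tuple of increasing maps
`Fin nᵢ → ℕ` is such a map on `P = Σ i, Fin nᵢ`.
-/

open Function
open scoped Nat

section Ramsey

variable {α κ : Type*}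

def IsHomogeneous (c : Finset α → κ) (m : ℕ) (T : Set α) : Prop :=
  ∃ d, ∀ t : Finset α, ↑t ⊆ T → t.card = m → c t = d

theorem IsHomogeneous.mono {c : Finset α → κ} {m : ℕ} {T T' : Set α} (h : IsHomogeneous c m T)
    (hT' : T' ⊆ T) : IsHomogeneous c m T' :=
  let ⟨d, hd⟩ := h
  ⟨d, fun t ht => hd t (ht.trans hT')⟩

/- Repeatedly split off the least element `a` of the current set and shrink the rest to an
infinite set on which `t ↦ c (insert a t)` is homogeneous. -/
theorem exists_strictMono_isHomogeneous_insert {m : ℕ}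
    (ramsey : ∀ (c : Finset ℕ → κ) (S : Set ℕ), S.Infinite →
      ∃ T ⊆ S, T.Infinite ∧ IsHomogeneous c m T)
    (c : Finset ℕ → κ) {S : Set ℕ} (hS : S.Infinite) :
    ∃ a : ℕ → ℕ, StrictMono a ∧ range a ⊆ S ∧
      ∀ i, IsHomogeneous (fun t => c (insert (a i) t)) m (a '' Ioi i) := by
  have step (S : {S : Set ℕ // S.Infinite}) : ∃ T : {T : Set ℕ // T.Infinite},
      T.1 ⊆ S.1 \ {sInf S.1} ∧ IsHomogeneous (fun t => c (insert (sInf S.1) t)) m T.1 :=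
    let ⟨T, hTS, hT, hhom⟩ := ramsey _ _ (S.2.sdiff (finite_singleton _))
    ⟨⟨T, hT⟩, hTS, hhom⟩
  choose next hnext_sub hnext_hom using step
  let X : ℕ → {S : Set ℕ // S.Infinite} := fun n => next^[n] ⟨S, hS⟩
  have hX_succ (n : ℕ) : X (n + 1) = next (X n) := iterate_succ_apply' ..
  let a n := sInf (X n).1
  have ha_mem (n : ℕ) : a n ∈ (X n).1 := Nat.sInf_mem (X n).2.nonempty
  have hX_anti : Antitone fun n => (X n).1 := antitone_nat_of_succ_le fun n => by
    rw [hX_succ]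
    exact (hnext_sub _).trans sdiff_subset
  refine ⟨a, strictMono_nat_of_lt_succ fun n => ?_, ?_, fun i => (hnext_hom (X i)).mono ?_⟩
  · have := hnext_sub _ (hX_succ n ▸ ha_mem (n + 1))
    exact lt_of_le_of_ne (Nat.sInf_le this.1) (Ne.symm this.2)
  · rintro _ ⟨n, rfl⟩
    exact hX_anti n.zero_le (ha_mem n)
  · rintro _ ⟨j, hij, rfl⟩
    rw [← hX_succ]
    exact hX_anti (Nat.succ_le_of_lt hij) (ha_mem j)

theorem exists_infinite_isHomogeneous [Finite κ] (c : Finset ℕ → κ) (m : ℕ) {S : Set ℕ}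
    (hS : S.Infinite) : ∃ T ⊆ S, T.Infinite ∧ IsHomogeneous c m T := by
  induction m generalizing c S with
  | zero => exact ⟨S, subset_rfl, hS, c ∅, fun t _ ht => by rw [Finset.card_eq_zero.1 ht]⟩
  | succ m ih =>
    obtain ⟨a, ha, haS, hhom⟩ :=
      exists_strictMono_isHomogeneous_insert (fun c _ hS => ih c hS) c hS
    choose f hf using hhom
    obtain ⟨d, hd⟩ := Finite.exists_infinite_fiber f
    refine ⟨a '' (f ⁻¹' {d}), (image_subset_range _ _).trans haS,
      (infinite_coe_iff.1 hd).image ha.injective.injOn, d, fun t ht hcard => ?_⟩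
    have hne : t.Nonempty := Finset.card_pos.1 (by omega)
    obtain ⟨i, hi, hmin⟩ := ht (t.min'_mem hne)
    have hmem : a i ∈ t := hmin ▸ t.min'_mem hne
    have hrest : ↑(t.erase (a i)) ⊆ a '' Ioi i := by
      intro y hy
      obtain ⟨hyi, hyt⟩ := Finset.mem_erase.1 hy
      obtain ⟨j, -, rfl⟩ := ht hyt
      exact ⟨j, ha.lt_iff_lt.1 (lt_of_le_of_ne (hmin ▸ t.min'_le _ hyt) (Ne.symm hyi)), rfl⟩
    rw [← Finset.insert_erase hmem]
    exact (hf i _ hrest (by rw [Finset.card_erase_of_mem hmem, hcard, Nat.add_sub_cancel])).trans hi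

theorem exists_infinite_forall_isHomogeneous {ι : Type*} [Finite ι] [Finite κ]
    (c : ι → Finset ℕ → κ) (m : ι → ℕ) {S : Set ℕ} (hS : S.Infinite) :
    ∃ T ⊆ S, T.Infinite ∧ ∀ i, IsHomogeneous (c i) (m i) T := by
  have := Fintype.ofFinite ι
  classical
  suffices ∀ s : Finset ι, ∃ T ⊆ S, T.Infinite ∧ ∀ i ∈ s, IsHomogeneous (c i) (m i) T by
    simpa using this Finset.univ
  intro s
  induction s using Finset.induction_on with
  | empty => exact ⟨S, subset_rfl, hS, by simp⟩
  | insert i s _ ih =>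
    obtain ⟨T, hTS, hT, hhom⟩ := ih
    obtain ⟨T', hT'T, hT', hhom'⟩ := exists_infinite_isHomogeneous (c i) (m i) hT
    refine ⟨T', hT'T.trans hTS, hT', fun j hj => ?_⟩
    rcases Finset.mem_insert.1 hj with rfl | hj
    · exact hhom'
    · exact (hhom j hj).mono hT'T

end Ramsey

section Surjections

theorem surjective_option_iff {α β : Type*} (f : Option α → β) :
    Surjective f ↔ ∀ y ≠ f none, y ∈ range (f ∘ some) := by
  refine ⟨fun hf y hy => ?_, fun hf y => ?_⟩
  · obtain ⟨_ | x, rfl⟩ := hf y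
    · exact absurd rfl hy
    · exact ⟨x, rfl⟩
  · by_cases hy : y = f none
    · exact ⟨none, hy.symm⟩
    · obtain ⟨x, rfl⟩ := hf y hy
      exact ⟨some x, rfl⟩

def surjectiveOptionEquiv (α β : Type*) :
    {f : Option α → β // Surjective f} ≃ Σ b : β, {g : α → β // ∀ y ≠ b, y ∈ range g} where
  toFun f := ⟨f.1 none, f.1 ∘ some, (surjective_option_iff f.1).1 f.2⟩
  invFun x := ⟨fun o => o.elim x.1 x.2.1, (surjective_option_iff _).2 x.2.2⟩
  left_inv f := by ext (_ | _) <;> rfl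
  right_inv _ := rfl

theorem setOf_forall_ne_mem_range_eq {α β : Type*} (b : β) :
    {g : α → β | ∀ y ≠ b, y ∈ range g} =
      {g | Surjective g} ∪ (fun h : α → {y // y ≠ b} => Subtype.val ∘ h) '' {h | Surjective h} := by
  classical
  ext g
  refine ⟨fun hg => ?_, ?_⟩
  · by_cases hb : b ∈ range g
    · exact .inl fun y => if hy : y = b then hy ▸ hb else hg y hy
    · refine .inr ⟨fun x => ⟨g x, fun h => hb ⟨x, h⟩⟩, fun y => ?_, rfl⟩
      obtain ⟨x, hx⟩ := hg y y.2
      exact ⟨x, Subtype.ext hx⟩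
  · rintro (hg | ⟨h, hh, rfl⟩) y hy
    · exact hg y
    · obtain ⟨x, hx⟩ := hh ⟨y, hy⟩
      exact ⟨x, congrArg Subtype.val hx⟩

theorem card_forall_ne_mem_range {α β : Type*} [Finite α] [Finite β] (b : β) :
    Nat.card {g : α → β // ∀ y ≠ b, y ∈ range g} =
      Nat.card {g : α → β // Surjective g} + Nat.card {h : α → {y // y ≠ b} // Surjective h} := by
  have hdisj : Disjoint {g : α → β | Surjective g}
      ((fun h : α → {y // y ≠ b} => Subtype.val ∘ h) '' {h | Surjective h}) := by
    refine Set.disjoint_left.2 fun g hg ⟨h, _, hhg⟩ => ?_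
    obtain ⟨x, hx⟩ := hg b
    subst hhg
    exact (h x).2 hx
  calc Nat.card {g : α → β // ∀ y ≠ b, y ∈ range g}
      = ({g : α → β | ∀ y ≠ b, y ∈ range g} : Set (α → β)).ncard := Nat.card_coe_set_eq _
    _ = _ := by
      rw [setOf_forall_ne_mem_range_eq, ncard_union_eq hdisj (toFinite _) (toFinite _),
        ncard_image_of_injective _ Subtype.val_injective.comp_left]
      rfl

theorem Nat.card_subtype_ne {β : Type*} [Finite β] (b : β) :
    Nat.card {y // y ≠ b} = Nat.card β - 1 := by
  have := Fintype.ofFinite β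
  classical
  simp [Nat.card_eq_fintype_card]

theorem Nat.card_surjective (α β : Type*) [Finite α] [Finite β] :
    Nat.card {f : α → β // Surjective f} =
      (Nat.card β)! * Nat.stirlingSecond (Nat.card α) (Nat.card β) := by
  induction α using Finite.induction_empty_option generalizing β with
  | of_equiv e ih =>
    rw [← Nat.card_congr e, ← ih β]
    exact Nat.card_congr <| .symm <| (e.arrowCongr (.refl β)).subtypeEquiv fun f =>
      (e.symm.surjective.of_comp_iff f).symm
  | h_empty =>
    rcases isEmpty_or_nonempty β with hβ | hβ
    · have : Unique {f : PEmpty → β // Surjective f} :=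
        ⟨⟨⟨isEmptyElim, isEmptyElim⟩⟩, fun _ => Subsingleton.elim _ _⟩
      rw [Nat.card_unique]
      simp
    · have : IsEmpty {f : PEmpty → β // Surjective f} :=
        ⟨fun f => isEmptyElim (f.2 (Classical.arbitrary β)).choose⟩
      rw [Nat.card_of_isEmpty, Nat.card_of_isEmpty (α := PEmpty),
        Nat.stirlingSecond_eq_zero_of_lt Nat.card_pos, mul_zero]
  | @h_option α _ ih =>
    have := Fintype.ofFinite β
    rw [Nat.card_congr (surjectiveOptionEquiv α β), Nat.card_sigma]
    simp only [card_forall_ne_mem_range, ih, Nat.card_subtype_ne, Finset.sum_const,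
      Finset.card_univ, smul_eq_mul, Finite.card_option, ← Nat.card_eq_fintype_card]
    rcases Nat.card β with _ | j
    · simp
    · rw [Nat.add_sub_cancel, Nat.stirlingSecond_succ_succ, Nat.factorial_succ]
      ring

theorem ncard_setOf_surjective_snd (P : Type*) [Finite P] (n : ℕ) :
    {x : Σ j : Fin (n + 1), P → Fin j | Surjective x.2}.ncard =
      ∑ j ∈ Finset.range (n + 1), j ! * Nat.stirlingSecond (Nat.card P) j := by
  let e : {x : Σ j : Fin (n + 1), P → Fin j | Surjective x.2} ≃
      Σ j : Fin (n + 1), {g : P → Fin j // Surjective g} :=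
    ⟨fun x => ⟨x.1.1, x.1.2, x.2⟩, fun y => ⟨⟨y.1, y.2.1⟩, y.2.2⟩, fun _ => rfl, fun _ => rfl⟩
  rw [← Nat.card_coe_set_eq, Nat.card_congr e, Nat.card_sigma]
  simp only [Nat.card_surjective, Nat.card_eq_fintype_card, Fintype.card_fin]
  exact Fin.sum_univ_eq_sum_range (fun j => j ! * Nat.stirlingSecond (Nat.card P) j) (n + 1)

end Surjections

section Pattern

theorem Finset.finite_ofPred_mem {α : Type*} (B : Finset α) : (Set.ofPred (· ∈ B)).Finite :=
  B.finite_toSet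

theorem Finset.toFinset_finite_ofPred_mem {α : Type*} (B : Finset α) :
    B.finite_ofPred_mem.toFinset = B :=
  B.finite_toSet_toFinset

variable {P : Type*} [Fintype P]

noncomputable def pattern (f : P → ℕ) (p : P) : Fin (Finset.univ.image f).card :=
  ⟨Nat.count (· ∈ Finset.univ.image f) (f p),
    (Nat.count_lt_card _ (Finset.mem_image_of_mem f (Finset.mem_univ p))).trans_eq
      (congrArg Finset.card (Finset.toFinset_finite_ofPred_mem _))⟩

theorem nth_pattern (f : P → ℕ) (p : P) :
    Nat.nth (· ∈ Finset.univ.image f) (pattern f p) = f p :=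
  Nat.nth_count (Finset.mem_image_of_mem f (Finset.mem_univ p))

theorem pattern_surjective (f : P → ℕ) : Surjective (pattern f) := by
  intro i
  have hi : (i : ℕ) < (Finset.finite_ofPred_mem (Finset.univ.image f)).toFinset.card := by
    rw [Finset.toFinset_finite_ofPred_mem]
    exact i.2
  obtain ⟨p, -, hp⟩ := Finset.mem_image.1 (Nat.nth_mem_of_lt_card _ hi)
  exact ⟨p, Fin.ext <| (congrArg _ hp).trans (Nat.count_nth_of_lt_card_finite _ hi)⟩

theorem exists_infinite_ncard_image_le {κ : Type*} [Finite κ] (χ : (P → ℕ) → κ) :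
    ∃ U : Set ℕ, U.Infinite ∧ (χ '' {f | ∀ p, f p ∈ U}).ncard ≤
      ∑ j ∈ Finset.range (Fintype.card P + 1), j ! * Nat.stirlingSecond (Fintype.card P) j := by
  let c (x : Σ j : Fin (Fintype.card P + 1), P → Fin j) (B : Finset ℕ) : κ :=
    χ fun p => Nat.nth (· ∈ B) (x.2 p)
  obtain ⟨U, -, hU, hhom⟩ := exists_infinite_forall_isHomogeneous c (fun x => x.1) infinite_univ
  choose d hd using hhom
  refine ⟨U, hU, ?_⟩
  have hsub : χ '' {f | ∀ p, f p ∈ U} ⊆ d '' {x | Surjective x.2} := by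
    rintro _ ⟨f, hf, rfl⟩
    refine ⟨⟨⟨_, Nat.lt_succ_of_le Finset.card_image_le⟩, pattern f⟩, pattern_surjective f, ?_⟩
    rw [← hd _ (Finset.univ.image f) (by simpa [range_subset_iff] using hf) rfl]
    simp only [c, nth_pattern]
  calc _ ≤ (d '' {x | Surjective x.2}).ncard := ncard_le_ncard hsub (toFinite _)
    _ ≤ ({x | Surjective x.2} : Set (Σ j : Fin (Fintype.card P + 1), P → Fin j)).ncard :=
      ncard_image_le (toFinite _)
    _ = _ := by rw [ncard_setOf_surjective_snd, Nat.card_eq_fintype_card]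

end Pattern

theorem stirling2_eq_stirlingSecond : ∀ n j, stirling2 n j = Nat.stirlingSecond n j
  | 0, 0 | 0, _ + 1 | _ + 1, 0 => rfl
  | n + 1, j + 1 => by
    rw [stirling2, Nat.stirlingSecond_succ_succ, stirling2_eq_stirlingSecond n (j + 1),
      stirling2_eq_stirlingSecond n j]

theorem stmt12_general (s : ℕ) (hs : 1 ≤ s) (nn : Fin s → ℕ) (hnn : ∀ i, 1 ≤ nn i)
    (k : ℕ)
    (χ : (∀ i : Fin s, Fin (nn i) ↪o ℕ) → Fin k) :
    ∃ U : Set ℕ, U.Infinite ∧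
      (χ '' {F | ∀ (i : Fin s) (j : Fin (nn i)), F i j ∈ U}).ncard ≤
        ∑ j ∈ Finset.Icc 1 (∑ i, nn i), (Nat.factorial j) * stirling2 (∑ i, nn i) j := by
  let flatten (F : ∀ i : Fin s, Fin (nn i) ↪o ℕ) (p : Σ i, Fin (nn i)) : ℕ := F p.1 p.2
  have hflatten : Injective flatten := fun F G h =>
    funext fun i => DFunLike.ext _ _ fun j => congrFun h ⟨i, j⟩
  let χ' := extend flatten (some ∘ χ) fun _ => none
  obtain ⟨U, hU, hcard⟩ := exists_infinite_ncard_image_le χ'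
  obtain ⟨N, hN⟩ : ∃ N, ∑ i, nn i = N + 1 :=
    Nat.exists_eq_add_one.2 (Finset.sum_pos (fun i _ => hnn i) ⟨⟨0, hs⟩, Finset.mem_univ _⟩)
  refine ⟨U, hU, ?_⟩
  calc _ = (some '' (χ '' _)).ncard := (ncard_image_of_injective _ (Option.some_injective _)).symm
    _ ≤ (χ' '' {f | ∀ p, f p ∈ U}).ncard := by
        refine ncard_le_ncard ?_ (toFinite _)
        rintro _ ⟨_, ⟨F, hF, rfl⟩, rfl⟩
        exact ⟨flatten F, fun p => hF p.1 p.2, hflatten.extend_apply _ _ F⟩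
    _ ≤ _ := hcard
    _ = _ := by
        simp only [Fintype.card_sigma, Fintype.card_fin, stirling2_eq_stirlingSecond, hN]
        rw [Finset.range_eq_Ico, Finset.sum_eq_sum_Ico_succ_bot (Nat.add_one_pos _),
          Nat.stirlingSecond_succ_zero, mul_zero, zero_add, Finset.Ico_add_one_right_eq_Icc]

/-- Infinite product Ramsey theorem: for every finite coloring of
`[ω]^{n₀} × … × [ω]^{n_{s-1}}` there is an infinite `U ⊆ ω` on which at most
`∑_{j=1}^N j!·S(N,j)` colors occur, where `N = n₀ + … + n_{s-1}`. -/
theorem stmt12 (s : ℕ) (hs : 1 ≤ s) (nn : Fin s → ℕ) (hnn : ∀ i, 1 ≤ nn i)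
    (k : ℕ) (hk : 2 ≤ k)
    (χ : (∀ i : Fin s, Fin (nn i) ↪o ℕ) → Fin k) :
    ∃ U : Set ℕ, U.Infinite ∧
      (χ '' {F | ∀ (i : Fin s) (j : Fin (nn i)), F i j ∈ U}).ncard ≤
        ∑ j ∈ Finset.Icc 1 (∑ i, nn i), (Nat.factorial j) * stirling2 (∑ i, nn i) j :=
  stmt12_general s hs nn hnn k χ
end

section
/- Let α be a countable ordinal with finite big Ramsey degrees. Then α^m has finite big Ramsey degrees for every integer m ≥ 1. -/
open Set

/-!
With `C = Iio α` we have `Iio (α ^ m) ≃o Lex (Fin m → C)` (digits in base `α`). An `n`-chain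
of `C^m` uses at most `N = n * m` coordinates, hence is determined by an `N`-chain `e` of `C`
together with one of finitely many patterns `p`. Colour each `N`-chain `e` of `C` by the
function `p ↦ colour of the chain (e, p)`, a colouring with finitely many colours. Finiteness of
the big Ramsey degree of `N`-chains in `C` gives a copy `A ⊆ C` of `C` on which at most `t` such
functions occur, and then at most `t * #patterns` colours occur on the copy `A^m` of `C^m`.
-/

noncomputable def Fin.consLexOrderIso (X : Type*) [LinearOrder X] (n : ℕ) :
    X ×ₗ Lex (Fin n → X) ≃o Lex (Fin (n + 1) → X) :=
  StrictMono.orderIsoOfSurjective (fun p => toLex (Fin.cons (ofLex p).1 (ofLex (ofLex p).2)))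
    (fun _ _ hpq => (Fin.pi_lex_lt_cons_cons (· < ·)).2 (Prod.Lex.lt_iff.1 hpq))
    (fun x => ⟨toLex (ofLex x 0, toLex (Fin.tail (ofLex x))), Fin.cons_self_tail (ofLex x)⟩)

theorem StrictMono.piLex_comp {ι X Y : Type*} [LinearOrder ι] [WellFoundedLT ι] [LinearOrder X]
    [LinearOrder Y] {f : X → Y} (hf : StrictMono f) :
    StrictMono fun x : Lex (ι → X) => toLex (f ∘ ofLex x) :=
  fun _ _ ⟨i, hxy, hi⟩ => ⟨i, fun j hj => congrArg f (hxy j hj), hf hi⟩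

namespace Ordinal

theorem mul_add_lt_mul {a b c d : Ordinal} (hc : c < a) (hb : b < d) :
    a * b + c < a * d :=
  calc a * b + c < a * b + a := add_lt_add_right hc _
    _ = a * Order.succ b := (mul_succ a b).symm
    _ ≤ a * d := mul_le_mul_right (Order.succ_le_of_lt hb) a

noncomputable def iioMulOrderIso (a b : Ordinal) : Iio (a * b) ≃o Iio b ×ₗ Iio a :=
  OrderIso.symm <| StrictMono.orderIsoOfSurjective
    (fun p => ⟨a * (ofLex p).1 + (ofLex p).2, mul_add_lt_mul (ofLex p).2.2 (ofLex p).1.2⟩)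
    (fun p q hpq => by
      rcases Prod.Lex.lt_iff.1 hpq with h | ⟨h, h'⟩
      · exact (mul_add_lt_mul (ofLex p).2.2 h).trans_le (le_add_right le_rfl)
      · rw [← Subtype.coe_lt_coe]
        simp only [h]
        exact add_lt_add_right (Subtype.coe_lt_coe.2 h') _)
    (fun x => by
      have ha : a ≠ 0 := by rintro rfl; simpa using x.2
      exact ⟨toLex (⟨x.1 / a, (lt_mul_iff_div_lt ha).1 x.2⟩, ⟨x.1 % a, mod_lt x.1 ha⟩),
        Subtype.ext (div_add_mod x.1 a)⟩)

noncomputable def iioPowOrderIso (a : Ordinal) :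
    (m : ℕ) → Iio (a ^ m) ≃o Lex (Fin m → Iio a)
  | 0 => (OrderIso.setCongr _ _ (by rw [pow_zero])).trans (OrderIso.ofUnique (Iio 1) _)
  | m + 1 => (OrderIso.setCongr _ _ (by rw [pow_succ])).trans <| (iioMulOrderIso _ _).trans <|
      (Prod.Lex.prodLexCongr (OrderIso.refl _) (iioPowOrderIso a m)).trans
        (Fin.consLexOrderIso _ m)

end Ordinal

theorem Set.ncard_image2_le {α β γ : Type*} (f : α → β → γ) {s : Set α} {t : Set β}
    (hs : s.Finite) (ht : t.Finite) : (image2 f s t).ncard ≤ s.ncard * t.ncard := by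
  rw [← image_uncurry_prod, ← ncard_prod]
  exact ncard_image_le (hs.prod ht)

theorem Set.Infinite.exists_fin_orderEmbedding {C : Type*} [LinearOrder C] {A S : Set C}
    (hA : A.Infinite) (hS : S.Finite) (hSA : S ⊆ A) {N : ℕ} (hN : S.ncard ≤ N) :
    ∃ e : Fin N ↪o C, S ⊆ range e ∧ range e ⊆ A := by
  obtain ⟨R, hRA, hR, hRcard⟩ := (hA.sdiff hS).exists_subset_ncard_eq (N - S.ncard)
  have hSR : (S ∪ R).Finite := hS.union hR
  have hcard : hSR.toFinset.card = N := by
    rw [← ncard_eq_toFinset_card _ hSR,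
      ncard_union_eq (disjoint_of_subset_right hRA disjoint_sdiff_right) hS hR, hRcard]
    omega
  refine ⟨hSR.toFinset.orderEmbOfFin hcard, ?_, ?_⟩ <;>
    rw [Finset.range_orderEmbOfFin, Finite.coe_toFinset]
  · exact subset_union_left
  · exact union_subset hSA (hRA.trans sdiff_subset)

section BigRamseyDegrees

variable {C D : Type*} [LinearOrder C] [LinearOrder D] {n t : ℕ}

theorem brdLE_of_finite [Finite C] : brdLE C n (Nat.card (Fin n ↪o C)) := by
  have : Finite (Fin n ↪o C) := Finite.of_injective _ DFunLike.coe_injective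
  exact fun _ _ _ =>
    ⟨univ, ⟨OrderIso.Set.univ⟩, (ncard_image_le (toFinite _)).trans (ncard_le_card _)⟩

theorem brdLE.of_orderIso (e : C ≃o D) (h : brdLE C n t) : brdLE D n t := by
  intro k hk χ
  obtain ⟨U, ⟨φ⟩, hU⟩ := h k hk fun f => χ (f.trans e.toOrderEmbedding)
  have hmono : StrictMono (e ∘ Subtype.val : U → D) :=
    e.strictMono.comp (Subtype.strictMono_coe U)
  refine ⟨range (e ∘ Subtype.val : U → D), ⟨((hmono.orderIso _).symm.trans φ).trans e⟩,
    le_trans (ncard_le_ncard ?_ (toFinite _)) hU⟩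
  rintro _ ⟨f, hf, rfl⟩
  refine ⟨f.trans e.symm.toOrderEmbedding, fun i => ?_, ?_⟩
  · obtain ⟨u, hu⟩ := hf i
    simp [← hu]
  · show χ _ = χ f
    congr 1
    ext
    simp

theorem finiteBRD.of_orderIso (e : C ≃o D) (h : finiteBRD C) : finiteBRD D := fun n hn =>
  let ⟨t, ht⟩ := h n hn
  ⟨t, ht.of_orderIso e⟩

theorem brdLE.exists_strictMono (h : brdLE C n t) {κ : Type*} [Finite κ]
    (χ : (Fin n ↪o C) → κ) :
    ∃ g : C → C, StrictMono g ∧ (χ '' {f | ∀ i, f i ∈ range g}).ncard ≤ t := by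
  let enc : κ ↪ Fin (Nat.card κ + 2) :=
    (Finite.equivFin κ).toEmbedding.trans (Fin.castLEEmb (by omega))
  obtain ⟨U, ⟨φ⟩, hcard⟩ := h _ (by omega) (enc ∘ χ)
  refine ⟨Subtype.val ∘ φ.symm, (Subtype.strictMono_coe _).comp φ.symm.strictMono, ?_⟩
  rw [image_comp, ncard_image_of_injective _ enc.injective] at hcard
  rwa [range_comp, φ.symm.range_eq, image_univ, Subtype.range_coe]

theorem exists_fin_orderEmbedding_comp_eq {ι : Type*} [Fintype ι] {A : Set C} (hA : A.Infinite)
    (g : Fin n → Lex (ι → C)) (hg : ∀ i j, ofLex (g i) j ∈ A) :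
    ∃ e : Fin (n * Fintype.card ι) ↪o C, range e ⊆ A ∧
      ∃ p : Fin n → ι → Fin (n * Fintype.card ι), ∀ i, toLex (e ∘ p i) = g i := by
  let coords : Fin n × ι → C := fun q => ofLex (g q.1) q.2
  have hcard : (range coords).ncard ≤ n * Fintype.card ι := by
    rw [← image_univ]
    exact (ncard_image_le finite_univ).trans_eq (by simp [ncard_univ])
  obtain ⟨e, hcoords, he⟩ := hA.exists_fin_orderEmbedding (finite_range coords)
    (range_subset_iff.2 fun q => hg q.1 q.2) hcard
  choose p hp using fun i j => hcoords (mem_range_self (f := coords) (i, j))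
  exact ⟨e, he, p, fun i => congrArg toLex (funext (hp i))⟩

section Pattern

variable {ι κ : Type*} [LinearOrder ι] [Fintype ι] {N : ℕ}

open Classical in
/-- A chain `e` of `N` points of `C` and a pattern `p` determine the `n`-tuple
`i ↦ (e (p i j))_j` in `Lex (ι → C)`; the pattern colouring records its `χ`-colour,
or `none` if it is not increasing. -/
noncomputable def patternColoring (χ : (Fin n ↪o Lex (ι → C)) → κ) (e : Fin N ↪o C)
    (p : Fin n → ι → Fin N) : Option κ :=
  if hp : StrictMono fun i => toLex (e ∘ p i) then some (χ (.ofStrictMono _ hp)) else none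

theorem patternColoring_eq_some (χ : (Fin n ↪o Lex (ι → C)) → κ) {e : Fin N ↪o C}
    {p : Fin n → ι → Fin N} {f : Fin n ↪o Lex (ι → C)}
    (hp : ∀ i, toLex (e ∘ p i) = f i) :
    patternColoring χ e p = some (χ f) := by
  have hpf : (fun i => toLex (e ∘ p i)) = f := funext hp
  rw [patternColoring, dif_pos (hpf ▸ f.strictMono)]
  congr 2
  exact DFunLike.ext _ _ hp

theorem image_subset_image2_patternColoring [Infinite C] (χ : (Fin n ↪o Lex (ι → C)) → κ)
    {g : C → C} (hg : StrictMono g) :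
    some '' (χ '' {f | ∀ i, f i ∈ range fun x : Lex (ι → C) => toLex (g ∘ ofLex x)}) ⊆
      image2 (fun F p => F p)
        (patternColoring χ '' {e : Fin (n * Fintype.card ι) ↪o C | ∀ i, e i ∈ range g})
        univ := by
  rintro _ ⟨_, ⟨f, hf, rfl⟩, rfl⟩
  have hfg : ∀ i j, ofLex (f i) j ∈ range g := fun i j => by
    obtain ⟨x, hx⟩ := hf i
    exact ⟨ofLex x j, by rw [← hx]; rfl⟩
  obtain ⟨e, heg, p, hp⟩ :=
    exists_fin_orderEmbedding_comp_eq (infinite_range_of_injective hg.injective) f hfg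
  exact ⟨_, ⟨e, fun i => heg (mem_range_self i), rfl⟩, p, mem_univ p,
    patternColoring_eq_some χ hp⟩

end Pattern

theorem finiteBRD.lexPi {ι : Type*} [LinearOrder ι] [Fintype ι] (h : finiteBRD C) :
    finiteBRD (Lex (ι → C)) := by
  intro n hn
  by_cases hfin : Finite (ι → C)
  · have : Finite (Lex (ι → C)) := hfin
    exact ⟨_, brdLE_of_finite⟩
  have : Infinite C := not_finite_iff_infinite.1 fun _ => hfin inferInstance
  have : Nonempty ι := not_isEmpty_iff.1 fun _ => hfin inferInstance
  obtain ⟨t, ht⟩ := h (n * Fintype.card ι) (Nat.mul_pos hn Fintype.card_pos)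
  refine ⟨t * Nat.card (Fin n → ι → Fin (n * Fintype.card ι)), fun k _ χ => ?_⟩
  obtain ⟨g, hg, hT⟩ := ht.exists_strictMono (patternColoring χ)
  refine ⟨_, ⟨(hg.piLex_comp (ι := ι).orderIso _).symm⟩, ?_⟩
  calc _ = (some '' (χ '' _)).ncard := (ncard_image_of_injective _ (Option.some_injective _)).symm
    _ ≤ _ := ncard_le_ncard (image_subset_image2_patternColoring χ hg) (toFinite _)
    _ ≤ _ := ncard_image2_le _ (toFinite _) (toFinite _)
    _ ≤ _ := by rw [ncard_univ]; exact Nat.mul_le_mul_right _ hT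

end BigRamseyDegrees

theorem stmt14_general (α : Ordinal) (hfin : finiteBRD ↥(Set.Iio α)) (m : ℕ) :
    finiteBRD ↥(Set.Iio (α ^ m)) :=
  (hfin.lexPi (ι := Fin m)).of_orderIso (Ordinal.iioPowOrderIso α m).symm

/-- If a countable ordinal `α` has finite big Ramsey degrees then so does `α ^ m`
for every integer `m ≥ 1`. -/
theorem stmt14 (α : Ordinal) (hcnt : α.card ≤ Cardinal.aleph0)
    (hfin : finiteBRD ↥(Set.Iio α)) (m : ℕ) (hm : 1 ≤ m) :
    finiteBRD ↥(Set.Iio (α ^ m)) :=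
  stmt14_general α hfin m
end

section
/- For all integers n ≥ 1, the big Ramsey degree of the n-element chain in the integers ℤ (with the usual order) equals 2^n: for every k ≥ 2 and every k-coloring of the n-element subsets of ℤ there is a subchain of ℤ order-isomorphic to ℤ attaining at most 2^n colors, and there is a coloring forcing exactly 2^n colors on every such subchain. -/
open Set

/-!
Enumerate `ℤ` as `0, -1, 1, -2, 2, …` by `Equiv.intEquivNat`, which sends `x` to `2x` or to
`2(-x-1) + 1`: its parity records the sign of `x` and its half the magnitude `x` or `-x-1`.
An `n`-element subset of `ℤ` listed in this order has a sign pattern in `Fin n → Bool`, and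
when its magnitudes are distinct it is determined by them together with this pattern.

For the upper bound, colour each `n`-set `A ⊆ ℕ` by the map sending a pattern `σ` to the colour
of the subset with magnitudes `A` and signs `σ`. Ramsey's theorem gives an infinite homogeneous
`M = {m 0 < m 1 < …}`; the copy of `ℤ` formed by the `m (2a)` and the `-m (2a+1) - 1` has
distinct magnitudes, all in `M`, so on it the colour depends only on the sign pattern.

For the lower bound, colour by the sign pattern. A copy of `ℤ` in `ℤ` is unbounded in both
directions, so it contains elements of increasing magnitude with any prescribed signs.
-/

open Function Filter

section SortImage

variable {α β : Type*} [LinearOrder α] [LinearOrder β] {n : ℕ}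

def sortImage (e : α ↪ β) (f : Fin n ↪o α) : Fin n ↪o β :=
  ((Finset.univ.map f.toEmbedding).map e).orderEmbOfFin (by simp)

theorem range_sortImage (e : α ↪ β) (f : Fin n ↪o α) :
    range (sortImage e f) = e '' range f := by
  simp [sortImage, Finset.range_orderEmbOfFin]

theorem sortImage_apply_mem (e : α ↪ β) (f : Fin n ↪o α) (i : Fin n) :
    sortImage e f i ∈ e '' range f :=
  range_sortImage e f ▸ mem_range_self i

theorem sortImage_symm_sortImage (e : α ≃ β) (f : Fin n ↪o α) :
    sortImage e.symm.toEmbedding (sortImage e.toEmbedding f) = f := by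
  rw [← OrderEmbedding.range_inj, range_sortImage, range_sortImage]
  simp [image_image]

theorem sortImage_sortImage_symm (e : α ≃ β) (g : Fin n ↪o β) :
    sortImage e.toEmbedding (sortImage e.symm.toEmbedding g) = g :=
  sortImage_symm_sortImage e.symm g

end SortImage

section Ramsey

variable {γ : Type*}

def IsHomogeneousOn (c : Finset ℕ → γ) (n : ℕ) (M : Set ℕ) : Prop :=
  ∃ v, ∀ A : Finset ℕ, ↑A ⊆ M → A.card = n → c A = v

theorem exists_infinite_isHomogeneousOn_succ_image [Finite γ] {c : Finset ℕ → γ} {n : ℕ} {a : ℕ → ℕ}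
    (ha : StrictMono a) {v : ℕ → γ}
    (hv : ∀ i, ∀ B : Finset ℕ, ↑B ⊆ a '' Ioi i → B.card = n → c (insert (a i) B) = v i) :
    ∃ I : Set ℕ, I.Infinite ∧ IsHomogeneousOn c (n + 1) (a '' I) := by
  obtain ⟨w, hw⟩ := Finite.exists_infinite_fiber v
  refine ⟨v ⁻¹' {w}, infinite_coe_iff.1 hw, w, fun A hA hcard => ?_⟩
  have hne : A.Nonempty := Finset.card_pos.1 (by omega)
  obtain ⟨i, hi, hmin⟩ := hA (A.min'_mem hne)
  have hrest : ↑(A.erase (a i)) ⊆ a '' Ioi i := by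
    intro x hx
    obtain ⟨hxa, hxA⟩ := Finset.mem_erase.1 hx
    obtain ⟨j, -, rfl⟩ := hA hxA
    have hlt : A.min' hne < a j := lt_of_le_of_ne (A.min'_le _ hxA) (hmin ▸ Ne.symm hxa)
    exact ⟨j, ha.lt_iff_lt.1 (hmin ▸ hlt), rfl⟩
  have hmem : a i ∈ A := hmin ▸ A.min'_mem hne
  rw [← Finset.insert_erase hmem, hv i _ hrest (by rw [Finset.card_erase_of_mem hmem]; omega)]
  exact hi

theorem exists_infinite_isHomogeneousOn [Finite γ] (n : ℕ) (c : Finset ℕ → γ) {S : Set ℕ}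
    (hS : S.Infinite) : ∃ M ⊆ S, M.Infinite ∧ IsHomogeneousOn c n M := by
  induction n generalizing c S with
  | zero => exact ⟨S, subset_rfl, hS, c ∅, fun A _ hA => by rw [Finset.card_eq_zero.1 hA]⟩
  | succ n ih =>
    have step : ∀ T : {T : Set ℕ // T.Infinite}, ∃ a ∈ T.1, ∃ T' : {T' : Set ℕ // T'.Infinite},
        T'.1 ⊆ T.1 ∩ Ioi a ∧ IsHomogeneousOn (fun B => c (insert a B)) n T'.1 := by
      rintro ⟨T, hT⟩
      obtain ⟨a, haT⟩ := hT.nonempty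
      obtain ⟨T', hT'sub, hT', hhom⟩ := ih (fun B => c (insert a B)) (hT.sdiff (finite_Iic a))
      exact ⟨a, haT, ⟨T', hT'⟩, fun x hx => ⟨(hT'sub hx).1, notMem_Iic.1 (hT'sub hx).2⟩, hhom⟩
    choose a haT next hnext v hv using step
    let G : ℕ → {T : Set ℕ // T.Infinite} := fun i => next^[i] ⟨S, hS⟩
    have hG : ∀ i, G (i + 1) = next (G i) := fun i => iterate_succ_apply' _ _ _
    have hGanti : Antitone fun i => (G i).1 := antitone_nat_of_succ_le fun i =>
      hG i ▸ fun x hx => (hnext _ hx).1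
    have haG : ∀ i j, i < j → a (G j) ∈ (G (i + 1)).1 := fun i j hij => hGanti hij (haT _)
    have hmono : StrictMono fun i => a (G i) := fun i j hij =>
      (hnext _ (hG i ▸ haG i j hij)).2
    have htail : ∀ i, (fun j => a (G j)) '' Ioi i ⊆ (next (G i)).1 := by
      rintro i _ ⟨j, hij, rfl⟩
      exact hG i ▸ haG i j hij
    obtain ⟨I, hI, hhom⟩ := exists_infinite_isHomogeneousOn_succ_image hmono (v := fun i => v (G i))
      fun i B hB => hv (G i) B (hB.trans (htail i))
    refine ⟨_, ?_, hI.image hmono.injective.injOn, hhom⟩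
    rintro _ ⟨i, -, rfl⟩
    exact hGanti (Nat.zero_le i) (haT _)

theorem exists_infinite_forall_orderEmbedding_eq [Finite γ] (n : ℕ) (c : (Fin n ↪o ℕ) → γ) :
    ∃ M : Set ℕ, M.Infinite ∧ ∃ v, ∀ a : Fin n ↪o ℕ, (∀ i, a i ∈ M) → c a = v := by
  obtain ⟨M, -, hM, v, hv⟩ := exists_infinite_isHomogeneousOn n
    (fun A => if h : A.card = n then c (A.orderEmbOfFin h) else c default) infinite_univ
  refine ⟨M, hM, v, fun a ha => ?_⟩
  have hcard : (Finset.univ.map a.toEmbedding).card = n := by simp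
  rw [← hv _ (by simpa [subset_def] using ha) hcard]
  simp only [dif_pos hcard]
  exact congrArg c (Finset.orderEmbOfFin_unique' hcard (by simp))

end Ramsey

section Bits

variable {n : ℕ}

def bitOrderEmb (σ : Fin n → Bool) (a : Fin n ↪o ℕ) : Fin n ↪o ℕ :=
  OrderEmbedding.ofStrictMono (fun i => Nat.bit (σ i) (a i))
    fun _ _ h => Nat.bit_lt_bit _ _ (a.strictMono h)

theorem exists_infinite_forall_eq_bodd {γ : Type*} [Finite γ] (ψ : (Fin n ↪o ℕ) → γ) :
    ∃ M : Set ℕ, M.Infinite ∧ ∃ v : (Fin n → Bool) → γ, ∀ s : Fin n ↪o ℕ,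
      (∀ i, (s i).div2 ∈ M) → Injective (fun i => (s i).div2) →
        ψ s = v fun i => (s i).bodd := by
  obtain ⟨M, hM, v, hv⟩ :=
    exists_infinite_forall_orderEmbedding_eq n fun a σ => ψ (bitOrderEmb σ a)
  refine ⟨M, hM, v, fun s hsM hsinj => ?_⟩
  have hdiv2 : Monotone Nat.div2 := fun x y h => by
    simpa only [Nat.div2_val] using Nat.div_le_div_right h
  let a : Fin n ↪o ℕ := OrderEmbedding.ofStrictMono _
    ((hdiv2.comp s.monotone).strictMono_of_injective hsinj)
  have hs : bitOrderEmb (fun i => (s i).bodd) a = s := by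
    ext i
    exact Nat.bit_bodd_div2 _
  calc ψ s = ψ (bitOrderEmb (fun i => (s i).bodd) a) := by rw [hs]
    _ = v fun i => (s i).bodd := congrFun (hv a hsM) _

end Bits

namespace Equiv

theorem intEquivNat_natCast (a : ℕ) : intEquivNat a = Nat.bit false a := rfl

theorem intEquivNat_negSucc (a : ℕ) : intEquivNat (Int.negSucc a) = Nat.bit true a := rfl

theorem bodd_intEquivNat (x : ℤ) : (intEquivNat x).bodd = decide (x < 0) := by
  cases x with
  | ofNat a => rw [Int.ofNat_eq_natCast, intEquivNat_natCast, Nat.bodd_bit]; simp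
  | negSucc a => rw [intEquivNat_negSucc, Nat.bodd_bit]; simp [Int.negSucc_lt_zero]

theorem natAbs_le_intEquivNat (x : ℤ) : x.natAbs ≤ intEquivNat x := by
  cases x with
  | ofNat a => rw [Int.ofNat_eq_natCast, intEquivNat_natCast, Nat.bit_val]; simp; omega
  | negSucc a => rw [intEquivNat_negSucc, Nat.bit_val]; simp; omega

end Equiv

def signPattern {n : ℕ} (f : Fin n ↪o ℤ) : Fin n → Bool :=
  fun i => (sortImage Equiv.intEquivNat.toEmbedding f i).bodd

def spread (m : ℕ → ℕ) : ℤ → ℤ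
  | .ofNat a => m (Nat.bit false a)
  | .negSucc a => .negSucc (m (Nat.bit true a))

theorem spread_strictMono {m : ℕ → ℕ} (hm : StrictMono m) : StrictMono (spread m) := by
  rintro (a | a) (b | b) h
  · exact Int.ofNat_lt.2 (hm (Nat.bit_lt_bit _ _ (Int.ofNat_lt.1 h)))
  · simp only [Int.negSucc_eq, Int.ofNat_eq_natCast] at h
    omega
  · exact (Int.negSucc_lt_zero _).trans_le (Int.natCast_nonneg _)
  · have hba : b < a := by
      simp only [Int.negSucc_eq] at h
      omega
    have := hm (Nat.bit_lt_bit true true hba)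
    simp only [spread, Int.negSucc_eq]
    omega

theorem div2_intEquivNat_spread (m : ℕ → ℕ) (x : ℤ) :
    (Equiv.intEquivNat (spread m x)).div2 = m (Equiv.intEquivNat x) := by
  cases x with
  | ofNat a => exact Nat.div2_bit false _
  | negSucc a => exact Nat.div2_bit true _

theorem exists_strictMono_forall_eq_signPattern {n : ℕ} {γ : Type*} [Finite γ]
    (χ : (Fin n ↪o ℤ) → γ) :
    ∃ m : ℕ → ℕ, StrictMono m ∧ ∃ v : (Fin n → Bool) → γ,
      ∀ f : Fin n ↪o ℤ, (∀ i, f i ∈ range (spread m)) → χ f = v (signPattern f) := by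
  obtain ⟨M, hM, v, hv⟩ :=
    exists_infinite_forall_eq_bodd (χ ∘ sortImage Equiv.intEquivNat.symm.toEmbedding)
  let m := Nat.nth (· ∈ M)
  refine ⟨m, Nat.nth_strictMono hM, v, fun f hf => ?_⟩
  let s := sortImage Equiv.intEquivNat.toEmbedding f
  have hs : ∀ i, ∃ x, s i = Equiv.intEquivNat (spread m x) := by
    intro i
    obtain ⟨_, ⟨j, rfl⟩, hj⟩ := sortImage_apply_mem Equiv.intEquivNat.toEmbedding f i
    obtain ⟨x, hx⟩ := hf j
    exact ⟨x, by rw [← hj, ← hx]; rfl⟩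
  choose x hx using hs
  have hdiv2 : ∀ i, (s i).div2 = m (Equiv.intEquivNat (x i)) := fun i => by
    rw [hx, div2_intEquivNat_spread]
  have hinj : Injective fun i => (s i).div2 := fun i j hij => by
    simp only [hdiv2] at hij
    exact s.injective (by rw [hx, hx, Equiv.injective _ ((Nat.nth_strictMono hM).injective hij)])
  have hχ := hv s (fun i => hdiv2 i ▸ Nat.nth_mem_of_infinite hM _) hinj
  rwa [comp_apply, sortImage_symm_sortImage] at hχ

theorem brdLE_int (n : ℕ) : brdLE ℤ n (2 ^ n) := by
  intro k _ χ
  obtain ⟨m, hm, v, hv⟩ := exists_strictMono_forall_eq_signPattern χ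
  refine ⟨range (spread m), ⟨(StrictMono.orderIso _ (spread_strictMono hm)).symm⟩, ?_⟩
  have hsub : χ '' {f | ∀ i, f i ∈ range (spread m)} ⊆ v '' univ := by
    rintro _ ⟨f, hf, rfl⟩
    exact ⟨_, trivial, (hv f hf).symm⟩
  calc (χ '' {f | ∀ i, f i ∈ range (spread m)}).ncard ≤ (v '' univ).ncard :=
        ncard_le_ncard hsub (toFinite _)
    _ ≤ (univ : Set (Fin n → Bool)).ncard := ncard_image_le (toFinite _)
    _ = 2 ^ n := by simp

theorem not_bddAbove_and_not_bddBelow_of_orderIso {U : Set ℤ} (ν : U ≃o ℤ) :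
    ¬BddAbove U ∧ ¬BddBelow U := by
  have hφ : StrictMono (Subtype.val ∘ ν.symm) := Subtype.strictMono_coe _ |>.comp ν.symm.strictMono
  have hrange : range (Subtype.val ∘ ν.symm) = U := by
    rw [ν.symm.surjective.range_comp, Subtype.range_coe]
  exact hrange ▸ ⟨hφ.not_bddAbove_range_of_isSuccArchimedean,
    hφ.not_bddBelow_range_of_isPredArchimedean⟩

theorem frequently_mem_image_intEquivNat {U : Set ℤ} (hU : ¬BddAbove U) (hU' : ¬BddBelow U)
    (b : Bool) : ∃ᶠ k in atTop, k ∈ Equiv.intEquivNat '' U ∧ k.bodd = b := by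
  refine frequently_atTop.2 fun N => ?_
  obtain ⟨u, hu, hNu, hb⟩ : ∃ u ∈ U, (N : ℤ) < u.natAbs ∧ decide (u < 0) = b := by
    cases b
    · obtain ⟨u, hu, hNu⟩ := not_bddAbove_iff.1 hU N
      exact ⟨u, hu, by omega, by simp; omega⟩
    · obtain ⟨u, hu, hNu⟩ := not_bddBelow_iff.1 hU' (-N)
      exact ⟨u, hu, by omega, by simp; omega⟩
  have := Equiv.natAbs_le_intEquivNat u
  exact ⟨_, by omega, mem_image_of_mem _ hu, (Equiv.bodd_intEquivNat u).trans hb⟩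

theorem exists_signPattern_eq {n : ℕ} {U : Set ℤ} (hU : ¬BddAbove U) (hU' : ¬BddBelow U)
    (σ : Fin n → Bool) : ∃ f : Fin n ↪o ℤ, (∀ i, f i ∈ U) ∧ signPattern f = σ := by
  let τ : ℕ → Bool := fun i => if h : i < n then σ ⟨i, h⟩ else false
  obtain ⟨φ, hφ, hφU⟩ := extraction_forall_of_frequently fun i =>
    frequently_mem_image_intEquivNat hU hU' (τ i)
  let g : Fin n ↪o ℕ := OrderEmbedding.ofStrictMono (fun i => φ i) (hφ.comp Fin.val_strictMono)
  refine ⟨sortImage Equiv.intEquivNat.symm.toEmbedding g, fun i => ?_, funext fun i => ?_⟩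
  · obtain ⟨_, ⟨j, rfl⟩, hj⟩ := sortImage_apply_mem Equiv.intEquivNat.symm.toEmbedding g i
    obtain ⟨u, hu, hφu⟩ := (hφU j).1
    rw [← hj]
    simpa [g, ← hφu] using hu
  · simp [signPattern, sortImage_sortImage_symm, g, (hφU i).2, τ]

theorem image_signPattern_of_orderIso {n : ℕ} {U : Set ℤ} (ν : U ≃o ℤ) :
    signPattern '' {f : Fin n ↪o ℤ | ∀ i, f i ∈ U} = univ := by
  obtain ⟨hU, hU'⟩ := not_bddAbove_and_not_bddBelow_of_orderIso ν
  refine eq_univ_of_forall fun σ => ?_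
  obtain ⟨f, hf, rfl⟩ := exists_signPattern_eq hU hU' σ
  exact ⟨f, hf, rfl⟩

theorem stmt19_general (n : ℕ) :
    brdLE ℤ n (2 ^ n) ∧
    ∃ k : ℕ, 2 ≤ k ∧ ∃ χ : (Fin n ↪o ℤ) → Fin k,
      ∀ U : Set ℤ, Nonempty (U ≃o ℤ) →
        (χ '' {f | ∀ i, f i ∈ U}).ncard = 2 ^ n := by
  let E : (Fin n → Bool) ↪ Fin (2 ^ n + 1) :=
    (Fintype.equivFinOfCardEq (by simp)).toEmbedding.trans Fin.castSuccEmb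
  refine ⟨brdLE_int n, 2 ^ n + 1, by have := n.one_le_two_pow; omega, E ∘ signPattern, ?_⟩
  rintro U ⟨ν⟩
  rw [image_comp, image_signPattern_of_orderIso ν, ncard_image_of_injective _ E.injective,
    ncard_univ]
  simp

/-- `T(n, ℤ) = 2 ^ n`: every finite coloring of the `n`-element subchains of `ℤ` admits a
subchain order-isomorphic to `ℤ` with at most `2 ^ n` colors, and some coloring attains
exactly `2 ^ n` colors on every subchain order-isomorphic to `ℤ`. -/
theorem stmt19 (n : ℕ) (hn : 1 ≤ n) :
    brdLE ℤ n (2 ^ n) ∧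
    ∃ k : ℕ, 2 ≤ k ∧ ∃ χ : (Fin n ↪o ℤ) → Fin k,
      ∀ U : Set ℤ, Nonempty (U ≃o ℤ) →
        (χ '' {f | ∀ i, f i ∈ U}).ncard = 2 ^ n :=
  stmt19_general n
end
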